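/- Let G: ℂ → ℂ be a C¹ orientation-preserving diffeomorphism (so |G_z|² − |G_z̄|² > 0 everywhere), let g: 𝔻 → ℂ be C¹, and set φ = G⁻¹ ∘ g. Then φ_z̄ = (1/(|G_z|² − |G_z̄|²)) ( G̅_z g_z̄ − G_z̄ g̅_z ), where G_z, G_z̄ are evaluated at φ(z). In particular, if there exist functions ℒ, ℳ on ℂ with ℳ nowhere zero such that ℒ(G)G_z + ℳ(G)G̅_z = 0 identically and ℒ(g)g_z + ℳ(g)g̅_z = 0 identically, then φ is holomorphic. -/

import Mathlib

/-!
Writing `df(v) = f_z v + f_z̄ v̄`, the chain rule becomes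
`(F ∘ f)_z̄ = F_z f_z̄ + F_z̄ conj f_z`. Applied to `G ∘ G⁻¹ = id` it gives a conjugate-linear
2 × 2 system for the derivatives of `G⁻¹`, with determinant `|G_z|² - |G_z̄|²`; the system is
solvable, so the determinant is nonzero, and Cramer's rule inserted into the chain rule for
`G⁻¹ ∘ g` gives the formula. Under the two relations, `(G_z, conj G_z̄)` at `φ(z)` and
`(g_z, conj g_z̄)` at `z` are both annihilated by `(ℒ(g z), ℳ(g z))` with `ℳ(g z) ≠ 0`, so they are
proportional and the numerator `conj G_z g_z̄ - G_z̄ conj g_z` vanishes.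
-/

open Complex ComplexConjugate

/-- The Wirtinger derivative `∂f/∂z = ½(∂f/∂x − i ∂f/∂y)`. -/
noncomputable def wZ (f : ℂ → ℂ) (z : ℂ) : ℂ :=
  (fderiv ℝ f z 1 - I * fderiv ℝ f z I) / 2

/-- The Wirtinger derivative `∂f/∂z̄ = ½(∂f/∂x + i ∂f/∂y)`. -/
noncomputable def wZBar (f : ℂ → ℂ) (z : ℂ) : ℂ :=
  (fderiv ℝ f z 1 + I * fderiv ℝ f z I) / 2

section Wirtinger

variable {f F : ℂ → ℂ} {z a b : ℂ}

theorem fderiv_apply_eq_wZ_add_wZBar (f : ℂ → ℂ) (z v : ℂ) :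
    fderiv ℝ f z v = wZ f z * v + wZBar f z * conj v := by
  have hv : v = v.re • (1 : ℂ) + v.im • I := by simp [Complex.real_smul, re_add_im]
  rw [hv, map_add, map_smul, map_smul]
  simp only [Complex.real_smul, mul_one, map_add, map_mul, conj_ofReal, conj_I, wZ, wZBar]
  linear_combination (v.im * fderiv ℝ f z I) * I_sq

theorem wZ_eq_of_fderiv_apply (h : ∀ v, fderiv ℝ f z v = a * v + b * conj v) : wZ f z = a := by
  rw [wZ, h, h, conj_I, map_one]
  linear_combination ((b - a) / 2) * I_sq

theorem wZBar_eq_of_fderiv_apply (h : ∀ v, fderiv ℝ f z v = a * v + b * conj v) :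
    wZBar f z = b := by
  rw [wZBar, h, h, conj_I, map_one]
  linear_combination ((a - b) / 2) * I_sq

theorem fderiv_comp_apply_eq_wirtinger (hF : DifferentiableAt ℝ F (f z))
    (hf : DifferentiableAt ℝ f z) (v : ℂ) :
    fderiv ℝ (F ∘ f) z v =
      (wZ F (f z) * wZ f z + wZBar F (f z) * conj (wZBar f z)) * v +
        (wZ F (f z) * wZBar f z + wZBar F (f z) * conj (wZ f z)) * conj v := by
  rw [fderiv_comp z hF hf, ContinuousLinearMap.comp_apply, fderiv_apply_eq_wZ_add_wZBar F,
    fderiv_apply_eq_wZ_add_wZBar f]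
  simp only [map_add, map_mul, conj_conj]
  ring

theorem wZ_comp (hF : DifferentiableAt ℝ F (f z)) (hf : DifferentiableAt ℝ f z) :
    wZ (F ∘ f) z = wZ F (f z) * wZ f z + wZBar F (f z) * conj (wZBar f z) :=
  wZ_eq_of_fderiv_apply (fderiv_comp_apply_eq_wirtinger hF hf)

theorem wZBar_comp (hF : DifferentiableAt ℝ F (f z)) (hf : DifferentiableAt ℝ f z) :
    wZBar (F ∘ f) z = wZ F (f z) * wZBar f z + wZBar F (f z) * conj (wZ f z) :=
  wZBar_eq_of_fderiv_apply (fderiv_comp_apply_eq_wirtinger hF hf)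

theorem wZ_id : wZ id z = 1 :=
  wZ_eq_of_fderiv_apply (b := 0) fun v => by simp [fderiv_id]

theorem wZBar_id : wZBar id z = 0 :=
  wZBar_eq_of_fderiv_apply (a := 1) fun v => by simp [fderiv_id]

theorem wZ_conj (f : ℂ → ℂ) (z : ℂ) : wZ (fun w => conj (f w)) z = conj (wZBar f z) := by
  rw [show (fun w => conj (f w)) = ⇑conjCLE ∘ f from rfl, wZ, wZBar, conjCLE.comp_fderiv]
  simp only [ContinuousLinearMap.comp_apply, ContinuousLinearEquiv.coe_coe, conjCLE_apply,
    map_div₀, map_add, map_mul, conj_I, map_ofNat]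
  ring

end Wirtinger

/-- Differentiating `G ∘ H = id` gives this system for `A = G_z`, `B = G_z̄`, `P = H_z`,
`Q = H_z̄`. -/
theorem solve_inverse_wirtinger_system {A B P Q : ℂ} (h₁ : A * P + B * conj Q = 1)
    (h₂ : A * Q + B * conj P = 0) :
    ((‖A‖ ^ 2 : ℂ) - (‖B‖ ^ 2 : ℂ)) ≠ 0 ∧
      P = conj A / ((‖A‖ ^ 2 : ℂ) - (‖B‖ ^ 2 : ℂ)) ∧
      Q = -B / ((‖A‖ ^ 2 : ℂ) - (‖B‖ ^ 2 : ℂ)) := by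
  rw [← mul_conj', ← mul_conj']
  have h₁' : conj A * conj P + conj B * Q = 1 := by simpa using congrArg conj h₁
  have h₂' : conj A * conj Q + conj B * P = 0 := by simpa using congrArg conj h₂
  have hP : P * (A * conj A - B * conj B) = conj A := by
    linear_combination conj A * h₁ - B * h₂'
  have hQ : Q * (A * conj A - B * conj B) = -B := by
    linear_combination conj A * h₂ - B * h₁'
  have hJ : A * conj A - B * conj B ≠ 0 := by
    intro hJ
    rw [hJ, mul_zero, eq_comm, map_eq_zero] at hP
    rw [hJ, mul_zero, eq_comm, neg_eq_zero] at hQ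
    simp [hP, hQ] at h₁
  exact ⟨hJ, eq_div_of_mul_eq hJ hP, eq_div_of_mul_eq hJ hQ⟩

theorem wZBar_comp_of_rightInverse {G H g : ℂ → ℂ} {z : ℂ} (hGH : Function.RightInverse H G)
    (hG : DifferentiableAt ℝ G (H (g z))) (hH : DifferentiableAt ℝ H (g z))
    (hg : DifferentiableAt ℝ g z) :
    wZBar (H ∘ g) z =
      (1 / ((‖wZ G (H (g z))‖ ^ 2 : ℂ) - (‖wZBar G (H (g z))‖ ^ 2 : ℂ))) *
        (conj (wZ G (H (g z))) * wZBar g z - wZBar G (H (g z)) * conj (wZ g z)) := by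
  have hGH' : G ∘ H = id := funext hGH
  have h₁ : wZ G (H (g z)) * wZ H (g z) + wZBar G (H (g z)) * conj (wZBar H (g z)) = 1 := by
    rw [← wZ_comp hG hH, hGH', wZ_id]
  have h₂ : wZ G (H (g z)) * wZBar H (g z) + wZBar G (H (g z)) * conj (wZ H (g z)) = 0 := by
    rw [← wZBar_comp hG hH, hGH', wZBar_id]
  obtain ⟨hJ, hP, hQ⟩ := solve_inverse_wirtinger_system h₁ h₂
  rw [wZBar_comp hH hg, hP, hQ]
  field_simp
  ring

/-- Two vectors `(A, B̄)`, `(a, b̄)` annihilated by the same `(l, m)` with `m ≠ 0` are parallel. -/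
theorem conj_mul_sub_mul_conj_eq_zero {l m A B a b : ℂ} (hm : m ≠ 0)
    (hA : l * A + m * conj B = 0) (ha : l * a + m * conj b = 0) :
    conj A * b - B * conj a = 0 := by
  have h : m * (a * conj B - A * conj b) = 0 := by linear_combination a * hA - A * ha
  have h' : a * conj B - A * conj b = 0 := (mul_eq_zero.mp h).resolve_left hm
  have h'' : conj a * B - conj A * b = 0 := by simpa using congrArg conj h'
  linear_combination -h''

theorem transition_map_holomorphic_general (G Ginv g : ℂ → ℂ)
    (hG : ContDiff ℝ 1 G) (hg : ContDiffOn ℝ 1 g (Metric.ball (0 : ℂ) 1))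
    (hGinv₂ : Function.RightInverse Ginv G)
    (hGinvC : ContDiff ℝ 1 Ginv) :
    (∀ z ∈ Metric.ball (0 : ℂ) 1,
      wZBar (Ginv ∘ g) z =
        (1 / ((‖wZ G (Ginv (g z))‖ ^ 2 : ℂ) -
            (‖wZBar G (Ginv (g z))‖ ^ 2 : ℂ))) *
          (conj (wZ G (Ginv (g z))) * wZBar g z -
            wZBar G (Ginv (g z)) * conj (wZ g z))) ∧
    (∀ L M : ℂ → ℂ, (∀ q : ℂ, M q ≠ 0) →
      (∀ z : ℂ, L (G z) * wZ G z + M (G z) * wZ (fun w => conj (G w)) z = 0) →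
      (∀ z ∈ Metric.ball (0 : ℂ) 1,
        L (g z) * wZ g z + M (g z) * wZ (fun w => conj (g w)) z = 0) →
      ∀ z ∈ Metric.ball (0 : ℂ) 1, wZBar (Ginv ∘ g) z = 0) := by
  have formula : ∀ z ∈ Metric.ball (0 : ℂ) 1, wZBar (Ginv ∘ g) z =
      (1 / ((‖wZ G (Ginv (g z))‖ ^ 2 : ℂ) - (‖wZBar G (Ginv (g z))‖ ^ 2 : ℂ))) *
        (conj (wZ G (Ginv (g z))) * wZBar g z - wZBar G (Ginv (g z)) * conj (wZ g z)) :=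
    fun z hz => wZBar_comp_of_rightInverse hGinv₂ (hG.differentiable one_ne_zero _)
      (hGinvC.differentiable one_ne_zero _)
      ((hg.differentiableOn one_ne_zero z hz).differentiableAt (Metric.isOpen_ball.mem_nhds hz))
  refine ⟨formula, fun L M hM hLG hLg z hz => ?_⟩
  have hA := hLG (Ginv (g z))
  rw [wZ_conj, hGinv₂ (g z)] at hA
  have ha := hLg z hz
  rw [wZ_conj] at ha
  rw [formula z hz, conj_mul_sub_mul_conj_eq_zero (hM (g z)) hA ha, mul_zero]

theorem transition_map_holomorphic (G Ginv g : ℂ → ℂ)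
    (hG : ContDiff ℝ 1 G) (hg : ContDiffOn ℝ 1 g (Metric.ball (0 : ℂ) 1))
    (hGinv₁ : Function.LeftInverse Ginv G) (hGinv₂ : Function.RightInverse Ginv G)
    (hGinvC : ContDiff ℝ 1 Ginv)
    (horient : ∀ z : ℂ, ‖wZ G z‖ ^ 2 - ‖wZBar G z‖ ^ 2 > 0) :
    (∀ z ∈ Metric.ball (0 : ℂ) 1,
      wZBar (Ginv ∘ g) z =
        (1 / ((‖wZ G (Ginv (g z))‖ ^ 2 : ℂ) -
            (‖wZBar G (Ginv (g z))‖ ^ 2 : ℂ))) *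
          (conj (wZ G (Ginv (g z))) * wZBar g z -
            wZBar G (Ginv (g z)) * conj (wZ g z))) ∧
    (∀ L M : ℂ → ℂ, (∀ q : ℂ, M q ≠ 0) →
      (∀ z : ℂ, L (G z) * wZ G z + M (G z) * wZ (fun w => conj (G w)) z = 0) →
      (∀ z ∈ Metric.ball (0 : ℂ) 1,
        L (g z) * wZ g z + M (g z) * wZ (fun w => conj (g w)) z = 0) →
      ∀ z ∈ Metric.ball (0 : ℂ) 1, wZBar (Ginv ∘ g) z = 0) :=
  transition_map_holomorphic_general G Ginv g hG hg hGinv₂ hGinvC
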